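/- There exists N₀ ∈ ℕ such that for every n ≥ N₀, all k, k' ∈ ℤ with |k|, |k'| ≤ n^{3/5}, and every ε ∈ [-1,1] with |ε| ≤ n^{-2/5}, it holds that |V(n,ε)(k) − V(n,ε)(k')| ≤ |k − k'|/√n. -/

import Mathlib

/-!
Writing `V(n,ε)(k) - V(n,ε)(k')` as a sum of `|k - k'|` point probabilities, it suffices to
bound each `B(n,ε)(t)` with `|t| ≤ n^{3/5}` by `1/√n`. With `m = (n+t)/2` this probability is
`C(n,m) ((1+ε)/2)^m ((1-ε)/2)^(n-m)`. The central coefficient satisfies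
`C(n,⌊n/2⌋) ≤ 2ⁿ √(2/(3n))`, and moving `j` steps off the centre costs a factor
`exp(-j(j-1)/m)`, while the bias contributes at most `exp(|ε| t - ε² (n-m))`. Completing the
square in `|ε|` shows that for `|ε| ≤ n^{-2/5}` and `t ≤ n^{3/5}` the total exponent is at most
`1/10`, and `√(2/3) · e^{1/10} < 1`.
-/

open Real

noncomputable def binPMF (n : ℕ) (ε : ℝ) (k : ℤ) : ℝ :=
  if ((n : ℤ) + k) % 2 = 0 ∧ -(n : ℤ) ≤ k ∧ k ≤ (n : ℤ) then
    (n.choose (((n : ℤ) + k) / 2).toNat : ℝ) *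
      ((1 + ε) / 2) ^ (((n : ℤ) + k) / 2).toNat *
      ((1 - ε) / 2) ^ (((n : ℤ) - k) / 2).toNat
  else 0

noncomputable def binTail (n : ℕ) (ε : ℝ) (k : ℤ) : ℝ :=
  ∑ t ∈ Finset.Icc k (n : ℤ), binPMF n ε t

theorem Nat.centralBinom_sq_mul_le (ν : ℕ) : ν.centralBinom ^ 2 * (3 * ν + 1) ≤ 16 ^ ν := by
  induction ν with
  | zero => simp
  | succ ν ih =>
    have hpoly : 4 * (2 * ν + 1) ^ 2 * (3 * ν + 4) ≤ 16 * (ν + 1) ^ 2 * (3 * ν + 1) := by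
      ring_nf; omega
    refine Nat.le_of_mul_le_mul_left ?_ (pow_pos ν.succ_pos 2)
    calc (ν + 1) ^ 2 * ((ν + 1).centralBinom ^ 2 * (3 * (ν + 1) + 1))
        = ((ν + 1) * (ν + 1).centralBinom) ^ 2 * (3 * ν + 4) := by ring
      _ = 4 * (2 * ν + 1) ^ 2 * (3 * ν + 4) * ν.centralBinom ^ 2 := by
          rw [Nat.succ_mul_centralBinom_succ]; ring
      _ ≤ 16 * (ν + 1) ^ 2 * (3 * ν + 1) * ν.centralBinom ^ 2 := by gcongr
      _ = 16 * (ν + 1) ^ 2 * (ν.centralBinom ^ 2 * (3 * ν + 1)) := by ring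
      _ ≤ 16 * (ν + 1) ^ 2 * 16 ^ ν := by gcongr
      _ = (ν + 1) ^ 2 * 16 ^ (ν + 1) := by ring

theorem Nat.choose_half_sq_mul_le (n : ℕ) : n.choose (n / 2) ^ 2 * (3 * n + 2) ≤ 2 * 4 ^ n := by
  obtain ⟨ν, rfl | rfl⟩ := Nat.even_or_odd' n
  · have h := Nat.centralBinom_sq_mul_le ν
    rw [Nat.centralBinom_eq_two_mul_choose] at h
    rw [Nat.mul_div_cancel_left ν two_pos, pow_mul]
    norm_num
    nlinarith [h]
  · have h := Nat.centralBinom_sq_mul_le (ν + 1)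
    have hodd : (ν + 1).centralBinom = 2 * (2 * ν + 1).choose ν := by
      rw [Nat.centralBinom_eq_two_mul_choose, show 2 * (ν + 1) = 2 * ν + 1 + 1 by ring,
        Nat.choose_succ_succ', ← Nat.choose_symm_half]
      ring
    have h4 : 4 ^ (2 * ν + 1) = 4 * 16 ^ ν := by rw [pow_succ, pow_mul]; norm_num; ring
    rw [hodd, pow_succ 16 ν] at h
    rw [show (2 * ν + 1) / 2 = ν by omega, h4]
    nlinarith [h]

theorem Nat.choose_half_le_two_pow_mul_sqrt {n : ℕ} (hn : 0 < n) :
    (n.choose (n / 2) : ℝ) ≤ 2 ^ n * √(2 / (3 * n)) := by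
  have hsq : (n.choose (n / 2) : ℝ) ^ 2 * (3 * n) ≤ (2 ^ n) ^ 2 * 2 := by
    have h := Nat.choose_half_sq_mul_le n
    have h4 : (4 : ℝ) ^ n = (2 ^ n) ^ 2 := by rw [← pow_mul, mul_comm, pow_mul]; norm_num
    have : ((n.choose (n / 2) ^ 2 * (3 * n + 2) : ℕ) : ℝ) ≤ ((2 * 4 ^ n : ℕ) : ℝ) := by
      exact_mod_cast h
    push_cast at this
    rw [h4] at this
    nlinarith [sq_nonneg (n.choose (n / 2) : ℝ)]
  rw [← Real.sqrt_sq (by positivity : (0:ℝ) ≤ 2 ^ n), ← Real.sqrt_mul (by positivity)]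
  apply Real.le_sqrt_of_sq_le
  rw [mul_div_assoc', le_div_iff₀ (by positivity)]
  exact hsq

theorem Nat.choose_succ_le_mul_exp {n c : ℕ} (hn : n ≤ 2 * c + 1) (j : ℕ) :
    (n.choose (c + j + 1) : ℝ) ≤ n.choose (c + j) * exp (-(2 * j) / (c + j + 1)) := by
  have hs : (0 : ℝ) < c + j + 1 := by positivity
  have hfactor : ((n - (c + j) : ℕ) : ℝ) ≤ (c + j + 1) * exp (-(2 * j) / (c + j + 1)) := by
    rcases le_or_gt n (c + j) with h | h
    · rw [Nat.sub_eq_zero_of_le h, Nat.cast_zero]; positivity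
    calc ((n - (c + j) : ℕ) : ℝ) ≤ (c + j + 1) * (1 + -(2 * j) / (c + j + 1)) := by
          rw [Nat.cast_sub h.le, mul_add, mul_div_cancel₀ _ hs.ne']
          push_cast
          have : (n : ℝ) ≤ 2 * c + 1 := by exact_mod_cast hn
          linarith
      _ ≤ (c + j + 1) * exp (-(2 * j) / (c + j + 1)) := by
          gcongr; linarith [add_one_le_exp (-(2 * j : ℝ) / (c + j + 1))]
  have hrec : (n.choose (c + j + 1) : ℝ) * (c + j + 1) = n.choose (c + j) * (n - (c + j) : ℕ) := by
    exact_mod_cast Nat.choose_succ_right_eq n (c + j)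
  refine le_of_mul_le_mul_right ?_ hs
  calc (n.choose (c + j + 1) : ℝ) * (c + j + 1) = n.choose (c + j) * (n - (c + j) : ℕ) := hrec
    _ ≤ n.choose (c + j) * ((c + j + 1) * exp (-(2 * j) / (c + j + 1))) := by gcongr
    _ = n.choose (c + j) * exp (-(2 * j) / (c + j + 1)) * (c + j + 1) := by ring

theorem Nat.choose_add_le_mul_exp {n c : ℕ} (hn : n ≤ 2 * c + 1) (j : ℕ) :
    (n.choose (c + j) : ℝ) ≤ n.choose c * exp (-(j * (j - 1 : ℝ)) / (c + j)) := by
  induction j with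
  | zero => simp
  | succ j ih =>
    have hexp : -(j * (j - 1 : ℝ)) / (c + j) + -(2 * j) / (c + j + 1)
        ≤ -((j + 1) * (j + 1 - 1 : ℝ)) / (c + j + 1) := by
      rcases Nat.eq_zero_or_pos j with rfl | hj
      · simp
      have hj' : (1 : ℝ) ≤ j := by exact_mod_cast hj
      have : (j * (j - 1 : ℝ)) / (c + j + 1) ≤ (j * (j - 1 : ℝ)) / (c + j) := by
        apply div_le_div_of_nonneg_left <;> nlinarith
      have hsplit : ((j + 1) * (j + 1 - 1 : ℝ)) / (c + j + 1)
          = (j * (j - 1 : ℝ)) / (c + j + 1) + (2 * j) / (c + j + 1) := by ring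
      rw [neg_div, neg_div, neg_div, hsplit]
      linarith
    calc (n.choose (c + (j + 1)) : ℝ) ≤ n.choose (c + j) * exp (-(2 * j) / (c + j + 1)) :=
          Nat.choose_succ_le_mul_exp hn j
      _ ≤ n.choose c * exp (-(j * (j - 1 : ℝ)) / (c + j)) * exp (-(2 * j) / (c + j + 1)) := by
          gcongr
      _ ≤ n.choose c * exp (-((j + 1 : ℕ) * ((j + 1 : ℕ) - 1 : ℝ)) / (c + (j + 1 : ℕ))) := by
          rw [mul_assoc, ← exp_add]
          push_cast
          rw [← add_assoc]
          gcongr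

theorem one_add_pow_mul_one_sub_pow_le_exp {ε : ℝ} (hε : |ε| ≤ 1) (a K : ℕ) :
    (1 + ε) ^ (a + K) * (1 - ε) ^ a ≤ exp (|ε| * K - ε ^ 2 * a) := by
  obtain ⟨hε₁, hε₂⟩ := abs_le.mp hε
  have hsq : 0 ≤ 1 - ε ^ 2 := by nlinarith
  have hle₁ : 1 - ε ^ 2 ≤ exp (-ε ^ 2) := by linarith [add_one_le_exp (-ε ^ 2)]
  have hle₂ : 1 + ε ≤ exp |ε| := by linarith [add_one_le_exp |ε|, le_abs_self ε]
  calc (1 + ε) ^ (a + K) * (1 - ε) ^ a = (1 - ε ^ 2) ^ a * (1 + ε) ^ K := by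
        rw [pow_add, show 1 - ε ^ 2 = (1 + ε) * (1 - ε) by ring, mul_pow]; ring
    _ ≤ exp (-ε ^ 2) ^ a * exp |ε| ^ K :=
        mul_le_mul (pow_le_pow_left₀ hsq hle₁ a) (pow_le_pow_left₀ (by linarith) hle₂ K)
          (pow_nonneg (by linarith) K) (by positivity)
    _ = exp (|ε| * K - ε ^ 2 * a) := by rw [← exp_nat_mul, ← exp_nat_mul, ← exp_add]; ring_nf

theorem exponent_le_one_tenth {u b x D : ℝ} (hu : 100 ≤ u) (hb : 0 ≤ b) (hbu : b * u ^ 2 ≤ 1)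
    (hx : 0 ≤ x) (hxu : x ≤ u ^ 3) (hD : (x ^ 2 - 2 * x) / 4 ≤ D) :
    b * x - b ^ 2 * ((u ^ 5 - x) / 2) - D / ((u ^ 5 + x) / 2) ≤ 1 / 10 := by
  set N := u ^ 5 with hN
  have hN0 : 0 < N := by positivity
  have hD' : (x ^ 2 - 2 * x) / (2 * (N + x)) ≤ D / ((N + x) / 2) := by
    rw [show (x ^ 2 - 2 * x) / (2 * (N + x)) = (x ^ 2 - 2 * x) / 4 / ((N + x) / 2) by
      field_simp; ring]
    gcongr
  -- completing the square in `b` leaves the three small error terms below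
  have hsquare : b * x - b ^ 2 * ((N - x) / 2) - (x ^ 2 - 2 * x) / (2 * (N + x))
      = -((x - b * N) ^ 2 / (2 * N)) + b ^ 2 * x / 2 + x ^ 3 / (2 * N * (N + x))
        + x / (N + x) := by
    field_simp; ring
  have hbias : b ^ 2 * x / 2 ≤ 1 / (2 * u) := by
    rw [div_le_div_iff₀ (by norm_num) (by positivity)]
    have : (b * u ^ 2) ^ 2 * (x * u) ≤ 1 * u ^ 4 := by
      gcongr
      · exact pow_le_one₀ (by positivity) hbu
      · calc x * u ≤ u ^ 3 * u := by gcongr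
          _ = u ^ 4 := by ring
    nlinarith
  have hcube : x ^ 3 / (2 * N * (N + x)) ≤ 1 / (2 * u) := by
    rw [div_le_div_iff₀ (by positivity) (by positivity)]
    have : x ^ 3 ≤ (u ^ 3) ^ 3 := by gcongr
    nlinarith
  have hlin : x / (N + x) ≤ 1 / u ^ 2 := by
    rw [div_le_div_iff₀ (by positivity) (by positivity)]
    nlinarith
  have hu1 : 1 / (2 * u) ≤ 1 / 200 := by gcongr; linarith
  have hu2 : 1 / u ^ 2 ≤ 1 / 10000 := by gcongr; nlinarith
  have hsq : 0 ≤ (x - b * N) ^ 2 / (2 * N) := by positivity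
  linarith

theorem sq_sub_two_mul_div_four_le {K j : ℕ} (h : K ≤ 2 * j) :
    ((K : ℝ) ^ 2 - 2 * K) / 4 ≤ j * (j - 1 : ℝ) := by
  rcases Nat.eq_zero_or_pos j with rfl | hj
  · obtain rfl : K = 0 := by omega
    simp
  have hj' : (1 : ℝ) ≤ j := by exact_mod_cast hj
  have hK : (K : ℝ) ≤ 2 * j := by exact_mod_cast h
  nlinarith [mul_nonneg (by linarith : (0 : ℝ) ≤ j - K / 2) (by linarith : (0 : ℝ) ≤ j + K / 2 - 1)]

theorem choose_mul_pow_mul_pow_le_inv_sqrt {n m K : ℕ} {ε u : ℝ} (hu : 100 ≤ u)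
    (hn : (n : ℝ) = u ^ 5) (hm : 2 * m = n + K) (hK : (K : ℝ) ≤ u ^ 3) (hε : |ε| * u ^ 2 ≤ 1) :
    (n.choose m : ℝ) * ((1 + ε) / 2) ^ m * ((1 - ε) / 2) ^ (n - m) ≤ 1 / √n := by
  have hn0 : (0 : ℝ) < n := by rw [hn]; positivity
  have hε1 : |ε| ≤ 1 := by nlinarith [abs_nonneg ε]
  obtain ⟨hε₁, hε₂⟩ := abs_le.mp hε1
  obtain ⟨j, hj⟩ : ∃ j, m = n / 2 + j := ⟨m - n / 2, by omega⟩
  have hKn : K ≤ n := by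
    have : u ^ 3 ≤ u ^ 5 := pow_le_pow_right₀ (by linarith) (by norm_num)
    exact_mod_cast hK.trans (this.trans hn.ge)
  obtain ⟨a, ha⟩ : ∃ a, m = a + K := ⟨m - K, by omega⟩
  have hKj : K ≤ 2 * j := by omega
  have hnm : n - m = a := by omega
  have hmR : (m : ℝ) = (u ^ 5 + K) / 2 := by
    rw [← hn]; have : (2 * m : ℝ) = n + K := by exact_mod_cast hm
    linarith
  have haR : (a : ℝ) = (u ^ 5 - K) / 2 := by
    have : (m : ℝ) = a + K := by exact_mod_cast ha
    linarith
  set E := |ε| * K - ε ^ 2 * a - j * (j - 1 : ℝ) / m with hE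
  have hchoose : (n.choose m : ℝ) ≤ 2 ^ n * √(2 / (3 * n)) * exp (-(j * (j - 1 : ℝ)) / m) := by
    have := Nat.choose_add_le_mul_exp (by omega : n ≤ 2 * (n / 2) + 1) j
    rw [← hj, show ((n / 2 : ℕ) : ℝ) + j = m by exact_mod_cast hj.symm] at this
    refine this.trans ?_
    gcongr
    exact Nat.choose_half_le_two_pow_mul_sqrt (by exact_mod_cast hn0)
  have hpow : ((1 + ε) / 2) ^ m * ((1 - ε) / 2) ^ (n - m) ≤ exp (|ε| * K - ε ^ 2 * a) / 2 ^ n := by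
    rw [div_pow, div_pow, div_mul_div_comm, ← pow_add, show m + (n - m) = n by omega, hnm, ha]
    gcongr
    exact one_add_pow_mul_one_sub_pow_le_exp hε1 a K
  have hexp : E ≤ 1 / 10 := by
    rw [hE, ← sq_abs ε, haR, hmR]
    exact exponent_le_one_tenth hu (abs_nonneg ε) hε (Nat.cast_nonneg K) hK
      (sq_sub_two_mul_div_four_le hKj)
  have hsqrt : √(2 / (3 * n)) * (10 / 9) ≤ 1 / √n := by
    rw [show (10 / 9 : ℝ) = √((10 / 9) ^ 2) by rw [Real.sqrt_sq (by norm_num)],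
      ← Real.sqrt_mul (by positivity), one_div, ← Real.sqrt_inv]
    apply Real.sqrt_le_sqrt
    rw [show 2 / (3 * n) * (10 / 9 : ℝ) ^ 2 = 200 / 243 * (n : ℝ)⁻¹ by field_simp; ring]
    exact mul_le_of_le_one_left (inv_nonneg.2 hn0.le) (by norm_num)
  calc (n.choose m : ℝ) * ((1 + ε) / 2) ^ m * ((1 - ε) / 2) ^ (n - m)
      ≤ 2 ^ n * √(2 / (3 * n)) * exp (-(j * (j - 1 : ℝ)) / m) *
          (exp (|ε| * K - ε ^ 2 * a) / 2 ^ n) := by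
        rw [mul_assoc]
        exact mul_le_mul hchoose hpow
          (mul_nonneg (pow_nonneg (by linarith) _) (pow_nonneg (by linarith) _)) (by positivity)
    _ = √(2 / (3 * n)) * exp E := by
        rw [hE, sub_eq_add_neg _ (_ / _), exp_add, neg_div]; field_simp
    _ ≤ √(2 / (3 * n)) * (10 / 9) := by
        gcongr
        calc exp E ≤ exp (1 / 10) := exp_le_exp.mpr hexp
          _ ≤ 1 / (1 - 1 / 10) := exp_bound_div_one_sub_of_interval (by norm_num) (by norm_num)
          _ = 10 / 9 := by norm_num
    _ ≤ 1 / √n := hsqrt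

theorem binPMF_nonneg (n : ℕ) {ε : ℝ} (hε : ε ∈ Set.Icc (-1 : ℝ) 1) (k : ℤ) : 0 ≤ binPMF n ε k := by
  obtain ⟨h₁, h₂⟩ := hε
  unfold binPMF
  split_ifs
  · exact mul_nonneg (mul_nonneg (Nat.cast_nonneg _) (pow_nonneg (by linarith) _))
      (pow_nonneg (by linarith) _)
  · exact le_rfl

theorem binPMF_eq_zero_of_lt {n : ℕ} {k : ℤ} (ε : ℝ) (hk : (n : ℤ) < k) : binPMF n ε k = 0 :=
  if_neg fun h => by omega

theorem binPMF_neg (n : ℕ) (ε : ℝ) (k : ℤ) : binPMF n (-ε) (-k) = binPMF n ε k := by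
  unfold binPMF
  by_cases h : ((n : ℤ) + k) % 2 = 0 ∧ -(n : ℤ) ≤ k ∧ k ≤ (n : ℤ)
  · rw [if_pos (by omega), if_pos h]
    have hle : (((n : ℤ) + k) / 2).toNat ≤ n := by omega
    rw [show (((n : ℤ) + -k) / 2).toNat = n - (((n : ℤ) + k) / 2).toNat by omega,
      show (((n : ℤ) - -k) / 2).toNat = (((n : ℤ) + k) / 2).toNat by omega,
      show (((n : ℤ) - k) / 2).toNat = n - (((n : ℤ) + k) / 2).toNat by omega,
      Nat.choose_symm hle]
    ring_nf
  · rw [if_neg (by omega), if_neg h]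

theorem binPMF_natCast_le {n K : ℕ} {ε C : ℝ} (hC : 0 ≤ C)
    (h : ∀ m, 2 * m = n + K → (n.choose m : ℝ) * ((1 + ε) / 2) ^ m * ((1 - ε) / 2) ^ (n - m) ≤ C) :
    binPMF n ε K ≤ C := by
  unfold binPMF
  split_ifs with hpar
  · rw [show (((n : ℤ) - K) / 2).toNat = n - (((n : ℤ) + K) / 2).toNat by omega]
    exact h _ (by omega)
  · exact hC

theorem binPMF_le_inv_sqrt {n : ℕ} (hn : 10 ^ 10 ≤ n) {ε : ℝ} (hε : |ε| ≤ (n : ℝ) ^ (-(2 : ℝ) / 5))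
    {t : ℤ} (ht : |(t : ℝ)| ≤ (n : ℝ) ^ ((3 : ℝ) / 5)) : binPMF n ε t ≤ 1 / √n := by
  wlog ht0 : 0 ≤ t generalizing ε t
  · rw [← binPMF_neg]
    exact this (by rwa [abs_neg]) (by rwa [Int.cast_neg, abs_neg]) (by omega)
  lift t to ℕ using ht0
  have hn0 : (0 : ℝ) ≤ n := Nat.cast_nonneg n
  set u := (n : ℝ) ^ ((1 : ℝ) / 5)
  have hpow (k : ℕ) : u ^ k = (n : ℝ) ^ ((k : ℝ) / 5) := by
    rw [← Real.rpow_natCast, ← Real.rpow_mul hn0]; ring_nf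
  have hu5 : (n : ℝ) = u ^ 5 := by rw [hpow]; norm_num
  have hu : 100 ≤ u := by
    refine le_of_pow_le_pow_left₀ (by norm_num : 5 ≠ 0) (by positivity) ?_
    rw [← hu5]; exact_mod_cast (by norm_num : 100 ^ 5 ≤ 10 ^ 10).trans hn
  have hεu : |ε| * u ^ 2 ≤ 1 := by
    have : (n : ℝ) ^ (-(2 : ℝ) / 5) = (u ^ 2)⁻¹ := by rw [hpow, ← Real.rpow_neg hn0]; norm_num
    rwa [this, ← one_div, le_div_iff₀ (by positivity)] at hε
  refine binPMF_natCast_le (by positivity) fun m hm => ?_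
  refine choose_mul_pow_mul_pow_le_inv_sqrt hu hu5 hm ?_ hεu
  rw [hpow]; push_cast at ht; rw [abs_of_nonneg (by positivity)] at ht
  convert ht using 2; norm_num

theorem binTail_sub_binTail (n : ℕ) (ε : ℝ) {k k' : ℤ} (h : k ≤ k') :
    binTail n ε k - binTail n ε k' = ∑ t ∈ Finset.Ico k k', binPMF n ε t := by
  set M := max ((n : ℤ) + 1) k'
  -- beyond `n` the mass function vanishes, so every tail is a sum up to the common bound `M`
  have htail (a : ℤ) : binTail n ε a = ∑ t ∈ Finset.Ico a M, binPMF n ε t := by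
    rw [binTail, show Finset.Icc a (n : ℤ) = Finset.Ico a ((n : ℤ) + 1) by
      ext; simp only [Finset.mem_Icc, Finset.mem_Ico]; omega]
    refine Finset.sum_subset (Finset.Ico_subset_Ico_right (le_max_left _ _)) fun t ht ht' => ?_
    simp only [Finset.mem_Ico, not_and, not_lt] at ht ht'
    exact binPMF_eq_zero_of_lt ε (by omega)
  rw [htail, htail, ← Finset.Ico_union_Ico_eq_Ico h (le_max_right _ _),
    Finset.sum_union (Finset.Ico_disjoint_Ico_consecutive k k' M), add_sub_cancel_right]

theorem abs_binTail_sub_le {n : ℕ} {ε C : ℝ} (hε : ε ∈ Set.Icc (-1 : ℝ) 1) {k k' : ℤ}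
    (h : ∀ t, min k k' ≤ t → t ≤ max k k' → binPMF n ε t ≤ C) :
    |binTail n ε k - binTail n ε k'| ≤ |(k : ℝ) - k'| * C := by
  wlog hkk : k ≤ k' generalizing k k'
  · rw [abs_sub_comm, abs_sub_comm (k : ℝ)]
    exact this (fun t => by rw [min_comm, max_comm]; exact h t) (by omega)
  rw [binTail_sub_binTail n ε hkk,
    abs_of_nonneg (Finset.sum_nonneg fun t _ => binPMF_nonneg n hε t),
    abs_sub_comm, abs_of_nonneg (by exact_mod_cast sub_nonneg.2 hkk)]
  calc ∑ t ∈ Finset.Ico k k', binPMF n ε t ≤ (Finset.Ico k k').card • C := by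
        refine Finset.sum_le_card_nsmul _ _ _ fun t ht => ?_
        rw [Finset.mem_Ico] at ht
        exact h t (min_le_left k k' |>.trans ht.1) (ht.2.le.trans (le_max_right k k'))
    _ = ((k' : ℝ) - k) * C := by
        rw [nsmul_eq_mul, Int.card_Ico]
        congr 1
        exact_mod_cast Int.toNat_of_nonneg (sub_nonneg.2 hkk)

theorem stmt_4 :
    ∃ N0 : ℕ, ∀ n : ℕ, N0 ≤ n → ∀ k k' : ℤ, ∀ ε : ℝ, ε ∈ Set.Icc (-1 : ℝ) 1 →
      |(k : ℝ)| ≤ (n : ℝ) ^ ((3 : ℝ) / 5) → |(k' : ℝ)| ≤ (n : ℝ) ^ ((3 : ℝ) / 5) →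
      |ε| ≤ (n : ℝ) ^ (-(2 : ℝ) / 5) →
      |binTail n ε k - binTail n ε k'| ≤ |(k : ℝ) - (k' : ℝ)| / Real.sqrt n := by
  refine ⟨10 ^ 10, fun n hn k k' ε hε hk hk' hεn => ?_⟩
  rw [div_eq_mul_one_div]
  refine abs_binTail_sub_le hε fun t ht₁ ht₂ => binPMF_le_inv_sqrt hn hεn (abs_le.2 ⟨?_, ?_⟩)
  · calc -(n : ℝ) ^ ((3 : ℝ) / 5) ≤ min (k : ℝ) k' := le_min (abs_le.1 hk).1 (abs_le.1 hk').1
      _ ≤ t := by exact_mod_cast ht₁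
  · calc (t : ℝ) ≤ max (k : ℝ) k' := by exact_mod_cast ht₂
      _ ≤ (n : ℝ) ^ ((3 : ℝ) / 5) := max_le (abs_le.1 hk).2 (abs_le.1 hk').2
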